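/- Let A ∈ ℝ^{n×n} be K-monotone and A = U − V a K-regular splitting. Let U = F − G = F̄ − Ḡ be two K-weak regular splittings of type II of U, with V F⁻¹ G = G F⁻¹ V and V F̄⁻¹ Ḡ = Ḡ F̄⁻¹ V, and let s ≥ 1 be an integer. If Ḡ F̄⁻¹ ≥_K G F⁻¹ and T̂_s P_s ≥_K 0, then ρ(T_s) ≤ ρ(T̄_s) < 1, where T_s, T̂_s, P_s are built from the splitting U = F − G and T̄_s from U = F̄ − Ḡ. -/

import Mathlib

open Matrix Finset Filter

/-- A proper cone in `ℝ^n`: a closed, pointed, solid convex cone. -/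
def IsProperCone {n : ℕ} (K : Set (Fin n → ℝ)) : Prop :=
  IsClosed K ∧ Convex ℝ K ∧ (∀ c : ℝ, 0 ≤ c → ∀ x ∈ K, c • x ∈ K) ∧
    K ∩ (-K) = {0} ∧ (interior K).Nonempty

/-- `M ≥_K 0`: the matrix `M` leaves the cone `K` invariant. -/
def KNonneg {n : ℕ} (K : Set (Fin n → ℝ)) (M : Matrix (Fin n) (Fin n) ℝ) : Prop :=
  ∀ x ∈ K, M.mulVec x ∈ K

/-- Spectral radius: the supremum of the moduli of the complex eigenvalues. -/
noncomputable def specRad {n : ℕ} (M : Matrix (Fin n) (Fin n) ℝ) : ℝ :=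
  sSup ((fun z : ℂ => ‖z‖) '' spectrum ℂ (M.map Complex.ofReal))

/-- `A = U - V` is a `K`-regular splitting. -/
def KRegularSplitting {n : ℕ} (K : Set (Fin n → ℝ))
    (A U V : Matrix (Fin n) (Fin n) ℝ) : Prop :=
  A = U - V ∧ IsUnit U ∧ KNonneg K U⁻¹ ∧ KNonneg K V

/-- `A = U - V` is a `K`-weak regular splitting of type I. -/
def KWeakRegularSplittingI {n : ℕ} (K : Set (Fin n → ℝ))
    (A U V : Matrix (Fin n) (Fin n) ℝ) : Prop :=
  A = U - V ∧ IsUnit U ∧ KNonneg K U⁻¹ ∧ KNonneg K (U⁻¹ * V)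

/-- `A = U - V` is a `K`-weak regular splitting of type II. -/
def KWeakRegularSplittingII {n : ℕ} (K : Set (Fin n → ℝ))
    (A U V : Matrix (Fin n) (Fin n) ℝ) : Prop :=
  A = U - V ∧ IsUnit U ∧ KNonneg K U⁻¹ ∧ KNonneg K (V * U⁻¹)

/-- `A` is `K`-monotone: invertible with `A⁻¹ ≥_K 0`. -/
def KMonotone {n : ℕ} (K : Set (Fin n → ℝ)) (A : Matrix (Fin n) (Fin n) ℝ) : Prop :=
  IsUnit A ∧ KNonneg K A⁻¹

/-- Two-stage iteration matrix `T_s = (F⁻¹G)^s + Σ_{j=0}^{s-1} (F⁻¹G)^j F⁻¹ V`. -/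
noncomputable def twoStageT {n : ℕ} (F G V : Matrix (Fin n) (Fin n) ℝ) (s : ℕ) :
    Matrix (Fin n) (Fin n) ℝ :=
  (F⁻¹ * G) ^ s + (∑ j ∈ Finset.range s, (F⁻¹ * G) ^ j) * (F⁻¹ * V)

/-- `T̂_s = (GF⁻¹)^s + Σ_{j=0}^{s-1} (GF⁻¹)^j V F⁻¹`. -/
noncomputable def twoStageThat {n : ℕ} (F G V : Matrix (Fin n) (Fin n) ℝ) (s : ℕ) :
    Matrix (Fin n) (Fin n) ℝ :=
  (G * F⁻¹) ^ s + (∑ j ∈ Finset.range s, (G * F⁻¹) ^ j) * (V * F⁻¹)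

/-- `Q_s = Σ_{j=0}^{s-1} (F⁻¹G)^j F⁻¹`. -/
noncomputable def twoStageQ {n : ℕ} (F G : Matrix (Fin n) (Fin n) ℝ) (s : ℕ) :
    Matrix (Fin n) (Fin n) ℝ :=
  (∑ j ∈ Finset.range s, (F⁻¹ * G) ^ j) * F⁻¹


/-!
With `Q_s = U⁻¹ (1 - (G F⁻¹)^s)` one has `T_s = 1 - Q_s A`, which is similar (via `A`) to
`W = 1 - A Q_s = (G F⁻¹)^s + V Q_s ≥_K 0`. A Perron vector `x ∈ K` of `W` gives
`Q_s x = (1 - ρ(W)) A⁻¹ x`; as `Q_s x ∈ K` is nonzero, `ρ(W) < 1`. For the comparison,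
`(1 - W)⁻¹ = (A Q_s)⁻¹ = (1 - (G F⁻¹)^s)⁻¹ U A⁻¹`, so the resolvent identity and
`(Ḡ F̄⁻¹)^s ≥_K (G F⁻¹)^s` give `(1 - W̄)⁻¹ ≥_K (1 - W)⁻¹`. Since the spectral radius is
monotone on `K`-nonnegative matrices and `ρ((1 - W)⁻¹ - 1) = ρ(W) / (1 - ρ(W))`, this yields
`ρ(W) ≤ ρ(W̄)`.

The Perron–Frobenius theory for the proper cone rests on a functional `f` with `f z ≥ c ‖z‖` on
`K`: for an interior point `u`, `f ((λ - T)⁻¹ u) ≥ C⁻¹ (λ - ρ(T))⁻¹` blows up as `λ ↓ ρ(T)`, and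
the normalised vectors `(λ - T)⁻¹ u` accumulate at an eigenvector in `K`.
-/

open scoped Topology

attribute [local instance] Matrix.linftyOpNormedAddCommGroup Matrix.linftyOpNormedSpace
  Matrix.linftyOpNormedRing Matrix.linftyOpNormedAlgebra

variable {n : ℕ} {K : Set (Fin n → ℝ)}

namespace IsProperCone

theorem smul_mem (hK : IsProperCone K) {c : ℝ} (hc : 0 ≤ c) {x : Fin n → ℝ} (hx : x ∈ K) :
    c • x ∈ K :=
  hK.2.2.1 c hc x hx

theorem zero_mem (hK : IsProperCone K) : (0 : Fin n → ℝ) ∈ K := by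
  obtain ⟨u, hu⟩ := hK.2.2.2.2
  simpa using hK.smul_mem le_rfl (interior_subset hu)

theorem add_mem (hK : IsProperCone K) {x y : Fin n → ℝ} (hx : x ∈ K) (hy : y ∈ K) :
    x + y ∈ K := by
  have h := hK.smul_mem zero_le_two (hK.2.1 hx hy one_half_pos.le one_half_pos.le (add_halves 1))
  rwa [smul_add, smul_smul, smul_smul, mul_one_div_cancel two_ne_zero, one_smul, one_smul] at h

theorem sum_mem (hK : IsProperCone K) {ι : Type*} {s : Finset ι} {x : ι → Fin n → ℝ}
    (h : ∀ i ∈ s, x i ∈ K) : ∑ i ∈ s, x i ∈ K :=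
  Finset.sum_induction _ (· ∈ K) (fun _ _ => hK.add_mem) hK.zero_mem h

theorem eq_zero_of_neg_mem (hK : IsProperCone K) {x : Fin n → ℝ} (hx : x ∈ K) (hx' : -x ∈ K) :
    x = 0 := by
  have : x ∈ K ∩ -K := ⟨hx, Set.mem_neg.mpr hx'⟩
  rwa [hK.2.2.2.1] at this

theorem mem_of_tendsto (hK : IsProperCone K) {x : ℕ → Fin n → ℝ} {y : Fin n → ℝ}
    (h : Tendsto x atTop (𝓝 y)) (hx : ∀ k, x k ∈ K) : y ∈ K :=
  hK.1.mem_of_tendsto h (Eventually.of_forall hx)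

theorem exists_nonneg_functional_pos (hK : IsProperCone K) {x : Fin n → ℝ} (hx : x ∈ K)
    (hx0 : x ≠ 0) : ∃ f : (Fin n → ℝ) →L[ℝ] ℝ, (∀ y ∈ K, 0 ≤ f y) ∧ 0 < f x := by
  obtain ⟨f, u, hfu, hKu⟩ :=
    geometric_hahn_banach_point_closed hK.2.1 hK.1 fun h => hx0 (hK.eq_zero_of_neg_mem hx h)
  have hu : u < 0 := by simpa using hKu 0 hK.zero_mem
  refine ⟨f, fun y hy => ?_, by linarith [f.map_neg x]⟩
  by_contra! hfy
  -- a large multiple of `y` would lie in `K` below the level `u`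
  have h := hKu _ (hK.smul_mem (div_nonneg_of_nonpos (by linarith : u - 1 ≤ 0) hfy.le) hy)
  rw [f.map_smul, smul_eq_mul, div_mul_cancel₀ _ hfy.ne] at h
  linarith

theorem exists_coercive_functional (hK : IsProperCone K) :
    ∃ f : (Fin n → ℝ) →L[ℝ] ℝ, ∃ c > 0, ∀ z ∈ K, c * ‖z‖ ≤ f z := by
  set S := K ∩ Metric.sphere (0 : Fin n → ℝ) 1
  have hS : IsCompact S := (isCompact_sphere 0 1).inter_left hK.1
  have hpos : ∀ x ∈ S, ∃ f : (Fin n → ℝ) →L[ℝ] ℝ, (∀ y ∈ K, 0 ≤ f y) ∧ 0 < f x :=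
    fun x hx => hK.exists_nonneg_functional_pos hx.1 (ne_zero_of_mem_unit_sphere ⟨x, hx.2⟩)
  choose! F hFK hFx using hpos
  obtain ⟨b, hbS, hb, hcover⟩ := hS.elim_finite_subcover_image
    (fun x _ => isOpen_lt continuous_const (F x).continuous) fun x hx =>
      Set.mem_biUnion hx (hFx x hx)
  set f := ∑ x ∈ hb.toFinset, F x
  have hfS : ∀ y ∈ S, 0 < f y := by
    intro y hy
    obtain ⟨x, hx, hxy⟩ := Set.mem_iUnion₂.mp (hcover hy)
    rw [FunLike.coe_sum, Finset.sum_apply]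
    exact Finset.sum_pos' (fun z hz => hFK z (hbS (by simpa using hz)) y hy.1)
      ⟨x, by simpa using hx, hxy⟩
  obtain ⟨c, hc, hcf⟩ := hS.exists_forall_le' f.continuous.continuousOn hfS
  refine ⟨f, c, hc, fun z hz => ?_⟩
  rcases eq_or_ne z 0 with rfl | hz0
  · simp
  have hz : ‖z‖⁻¹ • z ∈ S := ⟨hK.smul_mem (by positivity) hz, by simp [norm_smul, hz0]⟩
  have := hcf _ hz
  rwa [f.map_smul, smul_eq_mul, le_inv_mul_iff₀ (norm_pos_iff.mpr hz0), mul_comm] at this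

end IsProperCone

theorem one_sub_mul_tsum_pow {R : Type*} [NormedRing R] {x : R} (h : Summable (x ^ ·)) :
    (1 - x) * ∑' m, x ^ m = 1 := by
  have h₁ : Tendsto (fun N => (1 - x) * ∑ m ∈ range N, x ^ m) atTop (𝓝 ((1 - x) * ∑' m, x ^ m)) :=
    h.hasSum.tendsto_sum_nat.const_mul (1 - x)
  have h₂ : Tendsto (fun N => (1 - x) * ∑ m ∈ range N, x ^ m) atTop (𝓝 1) := by
    simp_rw [mul_neg_geom_sum]
    simpa using tendsto_const_nhds.sub h.tendsto_atTop_zero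
  exact tendsto_nhds_unique h₁ h₂

theorem Summable.pow_pow {R : Type*} [NormedRing R] [CompleteSpace R] {x : R}
    (h : Summable (x ^ ·)) {s : ℕ} (hs : 1 ≤ s) : Summable ((x ^ s) ^ ·) := by
  simpa [Function.comp_def, ← pow_mul] using h.comp_injective (mul_right_injective₀ (by omega))

theorem HasSum.mulVec {ι : Type*} [Fintype ι] {M : ℕ → Matrix ι ι ℝ} {S : Matrix ι ι ℝ}
    (hS : HasSum M S) (x : ι → ℝ) : HasSum (fun m => M m *ᵥ x) (S *ᵥ x) :=
  hS.map (mulVec.addMonoidHomLeft x) (continuous_id.matrix_mulVec continuous_const)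

namespace Matrix

variable {ι : Type*} [Fintype ι] [DecidableEq ι]

theorem hasSum_pow_inv_one_sub {M : Matrix ι ι ℝ} (h : Summable (M ^ ·)) :
    HasSum (M ^ ·) (1 - M)⁻¹ := by
  rw [inv_eq_right_inv (one_sub_mul_tsum_pow h)]
  exact h.hasSum

theorem isUnit_one_sub_of_summable {M : Matrix ι ι ℝ} (h : Summable (M ^ ·)) : IsUnit (1 - M) :=
  (isUnit_iff_isUnit_det _).mpr (isUnit_det_of_right_inverse (one_sub_mul_tsum_pow h))

theorem map_ofReal_eq (M : Matrix ι ι ℝ) : M.map Complex.ofReal = Complex.ofRealHom.mapMatrix M :=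
  rfl

theorem mul_inv_one_sub {α : Type*} [CommRing α] {M : Matrix ι ι α} (h : IsUnit (1 - M)) :
    M * (1 - M)⁻¹ = (1 - M)⁻¹ - 1 :=
  calc M * (1 - M)⁻¹ = (1 - M)⁻¹ - (1 - M) * (1 - M)⁻¹ := by rw [sub_mul, one_mul, sub_sub_cancel]
    _ = (1 - M)⁻¹ - 1 := by rw [mul_nonsing_inv _ ((isUnit_iff_isUnit_det _).mp h)]

theorem norm_map_ofReal (M : Matrix ι ι ℝ) : ‖M.map Complex.ofReal‖ = ‖M‖ := by
  simp [linfty_opNorm_def]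

end Matrix

theorem specRad_nonneg (M : Matrix (Fin n) (Fin n) ℝ) : 0 ≤ specRad M :=
  Real.sSup_nonneg (by rintro _ ⟨μ, -, rfl⟩; exact norm_nonneg μ)

theorem norm_le_specRad {M : Matrix (Fin n) (Fin n) ℝ} {μ : ℂ}
    (hμ : μ ∈ spectrum ℂ (M.map Complex.ofReal)) : ‖μ‖ ≤ specRad M :=
  le_csSup ((spectrum.isCompact _).image continuous_norm).bddAbove ⟨μ, hμ, rfl⟩

theorem exists_norm_eq_specRad [NeZero n] (M : Matrix (Fin n) (Fin n) ℝ) :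
    ∃ μ ∈ spectrum ℂ (M.map Complex.ofReal), ‖μ‖ = specRad M :=
  ((spectrum.isCompact _).image continuous_norm).sSup_mem ((spectrum.nonempty _).image _)

theorem specRad_of_fin_zero (M : Matrix (Fin 0) (Fin 0) ℝ) : specRad M = 0 := by
  simp [specRad]

theorem specRad_mul_comm (X Y : Matrix (Fin n) (Fin n) ℝ) : specRad (X * Y) = specRad (Y * X) := by
  have : spectrum ℂ ((X * Y).map Complex.ofReal) = spectrum ℂ ((Y * X).map Complex.ofReal) := by
    ext μ
    simp only [Matrix.map_ofReal_eq, map_mul, Matrix.mem_spectrum_iff_isRoot_charpoly,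
      Matrix.charpoly_mul_comm]
  rw [specRad, specRad, this]

theorem specRad_pow_le_norm_pow [NeZero n] (M : Matrix (Fin n) (Fin n) ℝ) (m : ℕ) :
    specRad M ^ m ≤ ‖M ^ m‖ := by
  obtain ⟨μ, hμ, hμM⟩ := exists_norm_eq_specRad M
  rw [← hμM, ← norm_pow, ← Matrix.norm_map_ofReal, Matrix.map_ofReal_eq, map_pow]
  exact spectrum.norm_le_norm_of_mem (spectrum.pow_mem_pow _ m hμ)

theorem eventually_norm_pow_le_of_specRad_lt (M : Matrix (Fin n) (Fin n) ℝ) {l : ℝ}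
    (h : specRad M < l) :
    ∀ᶠ m in atTop, ‖M ^ m‖ ≤ l ^ m := by
  have hl : 0 < l := (specRad_nonneg M).trans_lt h
  have hrad : spectralRadius ℂ (M.map Complex.ofReal) < ENNReal.ofReal l := by
    refine lt_of_le_of_lt (iSup₂_le fun μ hμ => ?_) ((ENNReal.ofReal_lt_ofReal_iff hl).mpr h)
    rw [← ENNReal.ofReal_coe_nnreal, coe_nnnorm]
    exact ENNReal.ofReal_le_ofReal (norm_le_specRad hμ)
  filter_upwards [(spectrum.pow_norm_pow_one_div_tendsto_nhds_spectralRadius _).eventually_lt_const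
    hrad, eventually_ge_atTop 1] with m hm hm1
  rw [ENNReal.ofReal_lt_ofReal_iff hl, Matrix.map_ofReal_eq, ← map_pow, ← Matrix.map_ofReal_eq,
    Matrix.norm_map_ofReal] at hm
  have hm0 : (m : ℝ) ≠ 0 := by positivity
  calc ‖M ^ m‖ = (‖M ^ m‖ ^ (1 / (m : ℝ))) ^ m := by
        rw [← Real.rpow_natCast, ← Real.rpow_mul (norm_nonneg _), one_div_mul_cancel hm0,
          Real.rpow_one]
    _ ≤ l ^ m := pow_le_pow_left₀ (by positivity) hm.le m

theorem summable_pow_inv_smul (M : Matrix (Fin n) (Fin n) ℝ) {l : ℝ} (h : specRad M < l) :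
    Summable fun m => (l⁻¹ • M) ^ m := by
  have hl : 0 < l := (specRad_nonneg M).trans_lt h
  obtain ⟨l', hMl', hl'l⟩ := exists_between h
  refine .of_norm_bounded_eventually_nat (summable_geometric_of_lt_one
    (div_nonneg ((specRad_nonneg M).trans hMl'.le) hl.le) ((div_lt_one hl).mpr hl'l)) ?_
  filter_upwards [eventually_norm_pow_le_of_specRad_lt M hMl'] with m hm
  rw [smul_pow, norm_smul, norm_pow, norm_inv, Real.norm_of_nonneg hl.le, div_pow, div_eq_inv_mul,
    inv_pow]
  exact mul_le_mul_of_nonneg_left hm (by positivity)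

theorem summable_pow_of_specRad_lt_one {M : Matrix (Fin n) (Fin n) ℝ} (h : specRad M < 1) :
    Summable (M ^ ·) := by
  simpa using summable_pow_inv_smul M h

namespace KNonneg

variable {M N : Matrix (Fin n) (Fin n) ℝ}

theorem one : KNonneg K (1 : Matrix (Fin n) (Fin n) ℝ) := fun x hx => by
  rwa [one_mulVec]

theorem zero (hK : IsProperCone K) : KNonneg K (0 : Matrix (Fin n) (Fin n) ℝ) := fun x _ => by
  rw [zero_mulVec]
  exact hK.zero_mem

theorem mul (hM : KNonneg K M) (hN : KNonneg K N) : KNonneg K (M * N) := fun x hx => by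
  rw [← mulVec_mulVec]
  exact hM _ (hN x hx)

theorem pow (hM : KNonneg K M) (m : ℕ) : KNonneg K (M ^ m) := by
  induction m with
  | zero => rw [pow_zero]; exact one
  | succ m ih => rw [pow_succ]; exact ih.mul hM

theorem add (hK : IsProperCone K) (hM : KNonneg K M) (hN : KNonneg K N) : KNonneg K (M + N) :=
  fun x hx => by
    rw [add_mulVec]
    exact hK.add_mem (hM x hx) (hN x hx)

theorem smul (hK : IsProperCone K) {c : ℝ} (hc : 0 ≤ c) (hM : KNonneg K M) : KNonneg K (c • M) :=
  fun x hx => by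
    rw [smul_mulVec]
    exact hK.smul_mem hc (hM x hx)

theorem sum (hK : IsProperCone K) {ι : Type*} {s : Finset ι} {M : ι → Matrix (Fin n) (Fin n) ℝ}
    (h : ∀ i ∈ s, KNonneg K (M i)) : KNonneg K (∑ i ∈ s, M i) :=
  Finset.sum_induction _ (KNonneg K) (fun _ _ => add hK) (zero hK) h

theorem of_hasSum (hK : IsProperCone K) {M : ℕ → Matrix (Fin n) (Fin n) ℝ}
    {S : Matrix (Fin n) (Fin n) ℝ} (hS : HasSum M S) (hM : ∀ m, KNonneg K (M m)) : KNonneg K S :=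
  fun x hx => hK.mem_of_tendsto (hS.mulVec x).tendsto_sum_nat fun _ =>
    hK.sum_mem fun m _ => hM m x hx

theorem pow_sub_pow (hK : IsProperCone K) (hM : KNonneg K M) (hMN : KNonneg K (N - M)) (m : ℕ) :
    KNonneg K (N ^ m - M ^ m) := by
  have hN : KNonneg K N := by simpa using hMN.add hK hM
  induction m with
  | zero => simpa using zero hK
  | succ m ih =>
    have e : N ^ (m + 1) - M ^ (m + 1) = N * (N ^ m - M ^ m) + (N - M) * M ^ m := by
      rw [pow_succ', pow_succ']
      noncomm_ring
    rw [e]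
    exact (hN.mul ih).add hK (hMN.mul (hM.pow m))

theorem inv_one_sub (hK : IsProperCone K) (hM : KNonneg K M) (h : Summable (M ^ ·)) :
    KNonneg K (1 - M)⁻¹ :=
  of_hasSum hK (Matrix.hasSum_pow_inv_one_sub h) hM.pow

theorem inv_one_sub_sub_one (hK : IsProperCone K) (hM : KNonneg K M) (h : Summable (M ^ ·)) :
    KNonneg K ((1 - M)⁻¹ - 1) := by
  rw [← Matrix.mul_inv_one_sub (isUnit_one_sub_of_summable h)]
  exact hM.mul (hM.inv_one_sub hK h)

end KNonneg

namespace IsProperCone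

theorem exists_norm_le_apply_mulVec (hK : IsProperCone K) {f : (Fin n → ℝ) →L[ℝ] ℝ} {c : ℝ}
    (hc : 0 < c) (hf : ∀ z ∈ K, c * ‖z‖ ≤ f z) :
    ∃ u ∈ K, ∃ C : ℝ, ∀ M, KNonneg K M → ‖M‖ ≤ C * f (M *ᵥ u) := by
  obtain ⟨u, hu⟩ := hK.2.2.2.2
  obtain ⟨ε, hε, hball⟩ := Metric.isOpen_iff.mp isOpen_interior u hu
  have hmem : ∀ y : Fin n → ℝ, ‖y‖ < ε → u + y ∈ K := fun y hy =>
    interior_subset (hball (by simpa [dist_eq_norm] using hy))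
  refine ⟨u, interior_subset hu, 2 / (c * ε), fun M hM => ?_⟩
  -- `M y` is half the difference of `M (u + y)` and `M (u - y)`, whose sum is `2 M u`
  have hbound : ∀ y : Fin n → ℝ, ‖y‖ < ε → c * ‖M *ᵥ y‖ ≤ f (M *ᵥ u) := by
    intro y hy
    have hplus := hf _ (hM _ (hmem y hy))
    have hminus := hf _ (hM _ (hmem (-y) (by rwa [norm_neg])))
    have e : M *ᵥ y = (1 / 2 : ℝ) • (M *ᵥ (u + y) - M *ᵥ (u + -y)) := by
      simp only [mulVec_add, mulVec_neg]
      module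
    have e' : f (M *ᵥ (u + y)) + f (M *ᵥ (u + -y)) = 2 * f (M *ᵥ u) := by
      simp only [mulVec_add, mulVec_neg, map_add, map_neg]
      ring
    rw [e, norm_smul, Real.norm_of_nonneg (by norm_num)]
    linarith [mul_le_mul_of_nonneg_left (norm_sub_le (M *ᵥ (u + y)) (M *ᵥ (u + -y))) hc.le]
  have hnorm : ‖M‖ = ‖ContinuousLinearMap.mk (mulVecLin M)‖ :=
    congrArg NNReal.toReal (linfty_opNNNorm_eq_opNNNorm M)
  have hMu : 0 ≤ f (M *ᵥ u) :=
    (mul_nonneg hc.le (norm_nonneg _)).trans (hf _ (hM u (interior_subset hu)))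
  rw [hnorm]
  refine ContinuousLinearMap.opNorm_le_of_shell hε (by positivity) (c := (2 : ℝ)) (by norm_num)
    fun y hy₁ hy₂ => ?_
  rw [Real.norm_two, div_le_iff₀ two_pos] at hy₁
  have := hbound y hy₂
  change ‖M *ᵥ y‖ ≤ _
  rw [div_mul_eq_mul_div, div_mul_eq_mul_div, le_div_iff₀ (by positivity)]
  nlinarith

theorem exists_specRad_pow_le [NeZero n] (hK : IsProperCone K) :
    ∃ u ∈ K, ∃ f : (Fin n → ℝ) →L[ℝ] ℝ,
      ∀ T, KNonneg K T → ∀ m : ℕ, specRad T ^ m ≤ f (T ^ m *ᵥ u) := by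
  obtain ⟨f, c, hc, hf⟩ := hK.exists_coercive_functional
  obtain ⟨u, hu, C, hC⟩ := hK.exists_norm_le_apply_mulVec hc hf
  exact ⟨u, hu, C • f, fun T hT m => (specRad_pow_le_norm_pow T m).trans (hC _ (hT.pow m))⟩

theorem le_specRad_of_sub_smul_mem (hK : IsProperCone K) {S : Matrix (Fin n) (Fin n) ℝ}
    (hS : KNonneg K S) {x : Fin n → ℝ} (hx : x ∈ K) (hx0 : x ≠ 0) {α : ℝ}
    (h : S *ᵥ x - α • x ∈ K) : α ≤ specRad S := by
  by_contra! hlt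
  obtain ⟨l, hSl, hlα⟩ := exists_between hlt
  have hl : 0 < l := (specRad_nonneg S).trans_lt hSl
  have hα : 0 < α := hl.trans hlα
  obtain ⟨f, c, hc, hf⟩ := hK.exists_coercive_functional
  have hfx : 0 < f x := (mul_pos hc (norm_pos_iff.mpr hx0)).trans_le (hf x hx)
  have hpow : ∀ m : ℕ, S ^ m *ᵥ x - α ^ m • x ∈ K := by
    intro m
    induction m with
    | zero => simpa using hK.zero_mem
    | succ m ih =>
      have e : S ^ (m + 1) *ᵥ x - α ^ (m + 1) • x
          = S *ᵥ (S ^ m *ᵥ x - α ^ m • x) + α ^ m • (S *ᵥ x - α • x) := by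
        rw [mulVec_sub, mulVec_smul, smul_sub, mulVec_mulVec, ← pow_succ', smul_smul, ← pow_succ]
        abel
      rw [e]
      exact hK.add_mem (hS _ ih) (hK.smul_mem (pow_nonneg hα.le m) h)
  -- `α ^ m f x ≤ f (S ^ m x) ≤ ‖f‖ ‖x‖ l ^ m` eventually, against `α > l`
  have hbound : ∀ᶠ m in atTop, (α / l) ^ m * f x ≤ ‖f‖ * ‖x‖ := by
    filter_upwards [eventually_norm_pow_le_of_specRad_lt S hSl] with m hm
    have h₁ : α ^ m * f x ≤ f (S ^ m *ᵥ x) := by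
      have := (mul_nonneg hc.le (norm_nonneg _)).trans (hf _ (hpow m))
      rw [map_sub, map_smul, smul_eq_mul] at this
      linarith
    have h₂ : f (S ^ m *ᵥ x) ≤ ‖f‖ * ‖x‖ * l ^ m :=
      calc f (S ^ m *ᵥ x) ≤ ‖f‖ * ‖S ^ m *ᵥ x‖ := (le_abs_self _).trans (f.le_opNorm _)
        _ ≤ ‖f‖ * (‖S ^ m‖ * ‖x‖) := by gcongr; exact linfty_opNorm_mulVec _ _
        _ ≤ ‖f‖ * ‖x‖ * l ^ m := by
          rw [mul_comm ‖S ^ m‖, ← mul_assoc]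
          gcongr
    rw [div_pow, div_mul_eq_mul_div, div_le_iff₀ (by positivity)]
    linarith
  have htend : Tendsto (fun m => (α / l) ^ m * f x) atTop atTop :=
    (tendsto_pow_atTop_atTop_of_one_lt ((one_lt_div hl).mpr hlα)).atTop_mul_const hfx
  obtain ⟨m, hm₁, hm₂⟩ := (hbound.and (htend.eventually_gt_atTop (‖f‖ * ‖x‖))).exists
  linarith

theorem exists_mulVec_eq_smul_of_tendsto (hK : IsProperCone K) (T : Matrix (Fin n) (Fin n) ℝ)
    {r : ℝ} {t : ℕ → ℝ} {y : ℕ → Fin n → ℝ} (hyK : ∀ k, y k ∈ K) (hy : ∀ k, ‖y k‖ = 1)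
    (ht : Tendsto t atTop (𝓝 r)) (hTy : Tendsto (fun k => T *ᵥ y k - t k • y k) atTop (𝓝 0)) :
    ∃ z ∈ K, z ≠ 0 ∧ T *ᵥ z = r • z := by
  obtain ⟨z, hz, φ, hφ, hyz⟩ :=
    (isCompact_sphere (0 : Fin n → ℝ) 1).tendsto_subseq (x := y) fun k => by simp [hy]
  refine ⟨z, hK.mem_of_tendsto hyz fun k => hyK _, ne_zero_of_mem_unit_sphere ⟨z, hz⟩, ?_⟩
  have h : Tendsto (fun k => T *ᵥ y (φ k) - t (φ k) • y (φ k)) atTop (𝓝 (T *ᵥ z - r • z)) :=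
    (((continuous_const.matrix_mulVec continuous_id).tendsto z).comp hyz).sub
      ((ht.comp hφ.tendsto_atTop).smul hyz)
  exact sub_eq_zero.mp (tendsto_nhds_unique h (hTy.comp hφ.tendsto_atTop))

theorem exists_resolvent_mem (hK : IsProperCone K) {T : Matrix (Fin n) (Fin n) ℝ}
    (hT : KNonneg K T) {u : Fin n → ℝ} (hu : u ∈ K) {f : (Fin n → ℝ) →L[ℝ] ℝ}
    (hf : ∀ m : ℕ, specRad T ^ m ≤ f (T ^ m *ᵥ u)) {l : ℝ} (hl : specRad T < l) :
    ∃ x ∈ K, T *ᵥ x = l • x - u ∧ (l - specRad T)⁻¹ ≤ f x := by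
  have hl0 : 0 < l := (specRad_nonneg T).trans_lt hl
  set N := l⁻¹ • T
  have hN := summable_pow_inv_smul T hl
  refine ⟨l⁻¹ • ((1 - N)⁻¹ *ᵥ u), hK.smul_mem (by positivity)
    ((hT.smul hK (by positivity)).inv_one_sub hK hN u hu), ?_, ?_⟩
  · have hTE : T * (1 - N)⁻¹ = l • ((1 - N)⁻¹ - 1) := by
      rw [show T = l • N by simp [N, smul_smul, hl0.ne'], smul_mul_assoc,
        mul_inv_one_sub (isUnit_one_sub_of_summable hN)]
    simp only [mulVec_smul, mulVec_mulVec, hTE, smul_mulVec, smul_smul, inv_mul_cancel₀ hl0.ne',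
      mul_inv_cancel₀ hl0.ne', one_smul, sub_mulVec, one_mulVec]
  · -- `f x = ∑ l⁻¹ ^ (m + 1) f (T ^ m u)` dominates `∑ l⁻¹ ^ (m + 1) ρ(T) ^ m = (l - ρ(T))⁻¹`
    have hsum : HasSum (fun m : ℕ => l⁻¹ ^ (m + 1) * f (T ^ m *ᵥ u))
        (f (l⁻¹ • ((1 - N)⁻¹ *ᵥ u))) := by
      convert (((hasSum_pow_inv_one_sub hN).mulVec u).const_smul l⁻¹).mapL f using 1
      funext m
      simp only [smul_pow, smul_mulVec, map_smul, smul_eq_mul, pow_succ']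
      ring
    have hgeom : HasSum (fun m : ℕ => l⁻¹ ^ (m + 1) * specRad T ^ m) (l - specRad T)⁻¹ := by
      have h := (hasSum_geometric_of_lt_one (div_nonneg (specRad_nonneg T) hl0.le)
        ((div_lt_one hl0).mpr hl)).mul_left l⁻¹
      have e₁ : (fun m : ℕ => l⁻¹ * (specRad T / l) ^ m)
          = fun m => l⁻¹ ^ (m + 1) * specRad T ^ m := by
        funext m
        rw [div_pow, pow_succ']
        ring
      have e₂ : l⁻¹ * (1 - specRad T / l)⁻¹ = (l - specRad T)⁻¹ := by
        field_simp [sub_ne_zero.mpr hl.ne']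
      rwa [e₁, e₂] at h
    exact hasSum_le (fun m => mul_le_mul_of_nonneg_left (hf m) (by positivity)) hgeom hsum

theorem exists_perron_vector [NeZero n] (hK : IsProperCone K) {T : Matrix (Fin n) (Fin n) ℝ}
    (hT : KNonneg K T) : ∃ x ∈ K, x ≠ 0 ∧ T *ᵥ x = specRad T • x := by
  obtain ⟨u, hu, f, hf⟩ := hK.exists_specRad_pow_le
  choose x hxK hTx hfx using fun k : ℕ =>
    hK.exists_resolvent_mem hT hu (hf T hT) (l := specRad T + ((k : ℝ) + 1)⁻¹)
      (lt_add_of_pos_right _ (by positivity))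
  have hgrow : ∀ k : ℕ, (k : ℝ) + 1 ≤ ‖f‖ * ‖x k‖ := fun k => by
    simpa using (hfx k).trans ((le_abs_self _).trans (f.le_opNorm _))
  have hf0 : 0 < ‖f‖ := by
    by_contra! h
    nlinarith [hgrow 0, norm_nonneg (x 0), norm_nonneg f]
  have hx0 : ∀ k, x k ≠ 0 := fun k h => by
    have := hgrow k
    rw [h, norm_zero, mul_zero] at this
    linarith [(k.cast_nonneg : (0 : ℝ) ≤ k)]
  have hxtop : Tendsto (fun k => ‖x k‖) atTop atTop :=
    tendsto_atTop_mono (fun k => (div_le_iff₀' hf0).mpr (hgrow k))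
      ((tendsto_natCast_atTop_atTop.atTop_add tendsto_const_nhds).atTop_div_const hf0)
  refine hK.exists_mulVec_eq_smul_of_tendsto T (t := fun k : ℕ => specRad T + ((k : ℝ) + 1)⁻¹)
    (y := fun k => ‖x k‖⁻¹ • x k)
    (fun k => hK.smul_mem (by positivity) (hxK k)) (fun k => norm_smul_inv_norm (hx0 k)) ?_ ?_
  · simpa using (tendsto_const_nhds (x := specRad T)).add tendsto_one_div_add_atTop_nhds_zero_nat
  · have h : Tendsto (fun k => -(‖x k‖⁻¹ • u)) atTop (𝓝 0) := by
      simpa using ((tendsto_inv_atTop_zero.comp hxtop).smul_const u).neg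
    refine h.congr fun k => ?_
    rw [mulVec_smul, hTx, smul_sub, smul_comm]
    abel

variable [NeZero n]

theorem specRad_one_sub_mul_lt_one (hK : IsProperCone K) {A Q : Matrix (Fin n) (Fin n) ℝ}
    (hA : KMonotone K A) (hQ : KNonneg K Q) (hQu : IsUnit Q) (hW : KNonneg K (1 - A * Q)) :
    specRad (1 - A * Q) < 1 := by
  obtain ⟨x, hxK, hx0, hx⟩ := hK.exists_perron_vector hW
  by_contra! h
  -- `A Q x = (1 - ρ) x` with `1 - ρ ≤ 0`, so `Q x ∈ K ∩ -K`
  have hAQx : A *ᵥ (Q *ᵥ x) = (1 - specRad (1 - A * Q)) • x := by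
    rw [mulVec_mulVec, sub_smul, one_smul, ← hx, sub_mulVec, one_mulVec, sub_sub_cancel]
  have hQx : Q *ᵥ x = (1 - specRad (1 - A * Q)) • (A⁻¹ *ᵥ x) := by
    rw [← mulVec_smul, ← hAQx, mulVec_mulVec, nonsing_inv_mul _ ((isUnit_iff_isUnit_det _).mp hA.1),
      one_mulVec]
  have hQx0 : Q *ᵥ x = 0 := hK.eq_zero_of_neg_mem (hQ x hxK) (by
    rw [hQx, ← neg_smul]
    exact hK.smul_mem (by linarith) (hA.2 x hxK))
  exact hx0 (mulVec_injective_iff_isUnit.mpr hQu (hQx0.trans (mulVec_zero Q).symm))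

theorem specRad_mono (hK : IsProperCone K) {B B' : Matrix (Fin n) (Fin n) ℝ} (hB : KNonneg K B)
    (hBB' : KNonneg K (B' - B)) : specRad B ≤ specRad B' := by
  obtain ⟨x, hxK, hx0, hx⟩ := hK.exists_perron_vector hB
  refine hK.le_specRad_of_sub_smul_mem (by simpa using hBB'.add hK hB) hxK hx0 ?_
  rw [← hx, ← sub_mulVec]
  exact hBB' x hxK

theorem specRad_inv_one_sub_sub_one (hK : IsProperCone K) {W : Matrix (Fin n) (Fin n) ℝ}
    (hW : KNonneg K W) (h : specRad W < 1) :
    specRad ((1 - W)⁻¹ - 1) = specRad W / (1 - specRad W) := by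
  have hs := summable_pow_of_specRad_lt_one h
  have hu := isUnit_one_sub_of_summable hs
  have hB := hW.inv_one_sub_sub_one hK hs
  have h1 : 0 < 1 - specRad W := by linarith
  apply le_antisymm
  · obtain ⟨w, hwK, hw0, hw⟩ := hK.exists_perron_vector hB
    have hβ := specRad_nonneg ((1 - W)⁻¹ - 1)
    -- with `β = ρ((1 - W)⁻¹ - 1)`: `(1 - W)⁻¹ w = (1 + β) w`, hence `(1 + β) W w = β w`
    have hWw : W *ᵥ w = (specRad ((1 - W)⁻¹ - 1) / (1 + specRad ((1 - W)⁻¹ - 1))) • w := by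
      have hEw : (1 - W)⁻¹ *ᵥ w = (1 + specRad ((1 - W)⁻¹ - 1)) • w := by
        rw [add_smul, one_smul, ← hw, sub_mulVec, one_mulVec, add_sub_cancel]
      have : (1 + specRad ((1 - W)⁻¹ - 1)) • (W *ᵥ w) = specRad ((1 - W)⁻¹ - 1) • w := by
        rw [← mulVec_smul, ← hEw, mulVec_mulVec, mul_inv_one_sub hu, hw]
      rw [div_eq_inv_mul, ← smul_smul, ← this, smul_smul, inv_mul_cancel₀ (by positivity), one_smul]
    have := hK.le_specRad_of_sub_smul_mem hW hwK hw0 (by rw [hWw, sub_self]; exact hK.zero_mem)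
    rw [div_le_iff₀ (by positivity)] at this
    rw [le_div_iff₀ h1]
    nlinarith
  · obtain ⟨x, hxK, hx0, hx⟩ := hK.exists_perron_vector hW
    have hEx : (1 - W)⁻¹ *ᵥ x = (1 - specRad W)⁻¹ • x := by
      have : (1 - W) *ᵥ x = (1 - specRad W) • x := by
        rw [sub_mulVec, one_mulVec, hx, sub_smul, one_smul]
      rw [← smul_right_inj h1.ne', smul_smul, mul_inv_cancel₀ h1.ne', one_smul, ← mulVec_smul,
        ← this, mulVec_mulVec, nonsing_inv_mul _ ((isUnit_iff_isUnit_det _).mp hu), one_mulVec]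
    refine hK.le_specRad_of_sub_smul_mem hB hxK hx0 ?_
    convert hK.zero_mem using 1
    rw [sub_mulVec, one_mulVec, hEx]
    match_scalars
    field_simp
    ring

theorem specRad_le_of_inv_one_sub_le (hK : IsProperCone K)
    {W W' : Matrix (Fin n) (Fin n) ℝ} (hW : KNonneg K W) (hW' : KNonneg K W')
    (h : specRad W < 1) (h' : specRad W' < 1) (hE : KNonneg K ((1 - W')⁻¹ - (1 - W)⁻¹)) :
    specRad W ≤ specRad W' := by
  have := hK.specRad_mono (hW.inv_one_sub_sub_one hK (summable_pow_of_specRad_lt_one h))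
    (B' := (1 - W')⁻¹ - 1) (by rwa [sub_sub_sub_cancel_right])
  rw [specRad_inv_one_sub_sub_one hK hW h, specRad_inv_one_sub_sub_one hK hW' h',
    div_le_div_iff₀ (by linarith) (by linarith)] at this
  nlinarith

end IsProperCone

section TwoStage

variable {A U V F G F' G' : Matrix (Fin n) (Fin n) ℝ} {s : ℕ}

theorem twoStageQ_eq_inv_mul_sum (F G : Matrix (Fin n) (Fin n) ℝ) (s : ℕ) :
    twoStageQ F G s = F⁻¹ * ∑ j ∈ range s, (G * F⁻¹) ^ j := by
  rw [twoStageQ, Finset.sum_mul, Finset.mul_sum]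
  exact Finset.sum_congr rfl fun j _ =>
    ((SemiconjBy.pow_right (mul_assoc F⁻¹ G F⁻¹).symm j).eq).symm

theorem twoStageQ_eq (hU : U = F - G) (hF : IsUnit F) (hUu : IsUnit U) (s : ℕ) :
    twoStageQ F G s = U⁻¹ * (1 - (G * F⁻¹) ^ s) := by
  have hUF : U * F⁻¹ = 1 - G * F⁻¹ := by
    rw [hU, sub_mul, mul_nonsing_inv _ ((isUnit_iff_isUnit_det _).mp hF)]
  rw [← mul_neg_geom_sum, ← hUF, ← mul_assoc, ← mul_assoc,
    nonsing_inv_mul _ ((isUnit_iff_isUnit_det _).mp hUu), one_mul, twoStageQ_eq_inv_mul_sum]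

theorem twoStageT_eq (hA : A = U - V) (hU : U = F - G) (hF : IsUnit F) (s : ℕ) :
    twoStageT F G V s = 1 - twoStageQ F G s * A := by
  have hFU : F⁻¹ * U = 1 - F⁻¹ * G := by
    rw [hU, mul_sub, nonsing_inv_mul _ ((isUnit_iff_isUnit_det _).mp hF)]
  rw [twoStageT, twoStageQ, hA, mul_sub, mul_assoc _ F⁻¹ U, hFU, geom_sum_mul_neg,
    mul_assoc _ F⁻¹ V]
  abel

theorem one_sub_mul_twoStageQ (hA : A = U - V) (hU : U = F - G) (hF : IsUnit F) (hUu : IsUnit U)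
    (s : ℕ) : 1 - A * twoStageQ F G s = (G * F⁻¹) ^ s + V * twoStageQ F G s := by
  rw [hA, sub_mul, twoStageQ_eq hU hF hUu, ← mul_assoc,
    mul_nonsing_inv _ ((isUnit_iff_isUnit_det _).mp hUu), one_mul]
  abel

theorem specRad_twoStageT (hA : A = U - V) (hU : U = F - G) (hF : IsUnit F) (hAu : IsUnit A)
    (s : ℕ) : specRad (twoStageT F G V s) = specRad (1 - A * twoStageQ F G s) := by
  have hdet := (isUnit_iff_isUnit_det _).mp hAu
  have hconj : 1 - twoStageQ F G s * A = A⁻¹ * (1 - A * twoStageQ F G s) * A := by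
    rw [mul_sub, mul_one, ← mul_assoc, nonsing_inv_mul _ hdet, one_mul, sub_mul,
      nonsing_inv_mul _ hdet]
  rw [twoStageT_eq hA hU hF, hconj, specRad_mul_comm, ← mul_assoc, mul_nonsing_inv _ hdet, one_mul]

theorem kNonneg_twoStageQ (hK : IsProperCone K) (hFi : KNonneg K F⁻¹)
    (hGF : KNonneg K (G * F⁻¹)) (s : ℕ) : KNonneg K (twoStageQ F G s) := by
  rw [twoStageQ_eq_inv_mul_sum]
  exact hFi.mul (KNonneg.sum hK fun j _ => hGF.pow j)

theorem kNonneg_one_sub_mul_twoStageQ (hK : IsProperCone K) (houter : KRegularSplitting K A U V)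
    (h : KWeakRegularSplittingII K U F G) (s : ℕ) : KNonneg K (1 - A * twoStageQ F G s) := by
  obtain ⟨hA, hUu, -, hV⟩ := houter
  obtain ⟨hU, hF, hFi, hGF⟩ := h
  rw [one_sub_mul_twoStageQ hA hU hF hUu]
  exact (hGF.pow s).add hK (hV.mul (kNonneg_twoStageQ hK hFi hGF s))

variable [NeZero n]

theorem KWeakRegularSplittingII.summable_pow (hK : IsProperCone K) (hU : KMonotone K U)
    (h : KWeakRegularSplittingII K U F G) : Summable ((G * F⁻¹) ^ ·) := by
  obtain ⟨hUFG, hF, hFi, hGF⟩ := h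
  have hW : 1 - U * F⁻¹ = G * F⁻¹ := by
    rw [hUFG, sub_mul, mul_nonsing_inv _ ((isUnit_iff_isUnit_det _).mp hF)]
    abel
  refine summable_pow_of_specRad_lt_one ?_
  rw [← hW]
  exact hK.specRad_one_sub_mul_lt_one hU hFi (isUnit_nonsing_inv_iff.mpr hF) (hW ▸ hGF)

theorem specRad_one_sub_mul_twoStageQ_lt_one (hK : IsProperCone K) (hA : KMonotone K A)
    (houter : KRegularSplitting K A U V) (h : KWeakRegularSplittingII K U F G) (hs : 1 ≤ s) :
    specRad (1 - A * twoStageQ F G s) < 1 := by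
  have hU : KMonotone K U := ⟨houter.2.1, houter.2.2.1⟩
  refine hK.specRad_one_sub_mul_lt_one hA (kNonneg_twoStageQ hK h.2.2.1 h.2.2.2 s) ?_
    (kNonneg_one_sub_mul_twoStageQ hK houter h s)
  rw [twoStageQ_eq h.1 h.2.1 houter.2.1]
  exact (isUnit_nonsing_inv_iff.mpr houter.2.1).mul
    (isUnit_one_sub_of_summable ((h.summable_pow hK hU).pow_pow hs))

theorem kNonneg_inv_mul_twoStageQ_sub (hK : IsProperCone K) (hA : KMonotone K A)
    (houter : KRegularSplitting K A U V) (h₁ : KWeakRegularSplittingII K U F G)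
    (h₂ : KWeakRegularSplittingII K U F' G') (hs : 1 ≤ s) (hge : KNonneg K (G' * F'⁻¹ - G * F⁻¹)) :
    KNonneg K ((A * twoStageQ F' G' s)⁻¹ - (A * twoStageQ F G s)⁻¹) := by
  have hU : KMonotone K U := ⟨houter.2.1, houter.2.2.1⟩
  have hsum₁ := (h₁.summable_pow hK hU).pow_pow hs
  have hsum₂ := (h₂.summable_pow hK hU).pow_pow hs
  have hP₁ := (isUnit_iff_isUnit_det _).mp (isUnit_one_sub_of_summable hsum₁)
  have hP₂ := (isUnit_iff_isUnit_det _).mp (isUnit_one_sub_of_summable hsum₂)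
  have hinv : ∀ {F G : Matrix (Fin n) (Fin n) ℝ}, KWeakRegularSplittingII K U F G →
      (A * twoStageQ F G s)⁻¹ = (1 - (G * F⁻¹) ^ s)⁻¹ * (U * A⁻¹) := fun h => by
    rw [twoStageQ_eq h.1 h.2.1 houter.2.1, Matrix.mul_inv_rev, Matrix.mul_inv_rev,
      nonsing_inv_nonsing_inv _ ((isUnit_iff_isUnit_det _).mp houter.2.1), mul_assoc]
  -- the resolvent identity `P₂⁻¹ - P₁⁻¹ = P₂⁻¹ (P₁ - P₂) P₁⁻¹` for `Pᵢ = 1 - (Gᵢ Fᵢ⁻¹) ^ s`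
  have hid : (A * twoStageQ F' G' s)⁻¹ - (A * twoStageQ F G s)⁻¹
      = (1 - (G' * F'⁻¹) ^ s)⁻¹ * ((G' * F'⁻¹) ^ s - (G * F⁻¹) ^ s) * (A * twoStageQ F G s)⁻¹ := by
    rw [hinv h₁, hinv h₂, show (G' * F'⁻¹) ^ s - (G * F⁻¹) ^ s
      = (1 - (G * F⁻¹) ^ s) - (1 - (G' * F'⁻¹) ^ s) by abel, mul_sub, sub_mul,
      nonsing_inv_mul _ hP₂, one_mul, mul_assoc, ← mul_assoc (1 - (G * F⁻¹) ^ s),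
      mul_nonsing_inv _ hP₁, one_mul]
  have hW := kNonneg_one_sub_mul_twoStageQ hK houter h₁ s
  have hX : KNonneg K (A * twoStageQ F G s)⁻¹ := by
    have := hW.inv_one_sub hK
      (summable_pow_of_specRad_lt_one (specRad_one_sub_mul_twoStageQ_lt_one hK hA houter h₁ hs))
    rwa [sub_sub_cancel] at this
  rw [hid]
  exact (((h₂.2.2.2.pow s).inv_one_sub hK hsum₂).mul (KNonneg.pow_sub_pow hK h₁.2.2.2 hge s)).mul hX

end TwoStage

theorem stmt_13_general {n : ℕ} (K : Set (Fin n → ℝ)) (hK : IsProperCone K)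
    (A U V F G F' G' : Matrix (Fin n) (Fin n) ℝ)
    (hmono : KMonotone K A)
    (houter : KRegularSplitting K A U V)
    (h₁ : KWeakRegularSplittingII K U F G)
    (h₂ : KWeakRegularSplittingII K U F' G')
    (s : ℕ) (hs : 1 ≤ s)
    (hge : KNonneg K (G' * F'⁻¹ - G * F⁻¹)) :
    specRad (twoStageT F G V s) ≤ specRad (twoStageT F' G' V s) ∧
    specRad (twoStageT F' G' V s) < 1 := by
  obtain rfl | hn := n.eq_zero_or_pos
  · simp [specRad_of_fin_zero]
  have : NeZero n := ⟨hn.ne'⟩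
  rw [specRad_twoStageT houter.1 h₁.1 h₁.2.1 hmono.1,
    specRad_twoStageT houter.1 h₂.1 h₂.2.1 hmono.1]
  have hW₂ := specRad_one_sub_mul_twoStageQ_lt_one hK hmono houter h₂ hs
  refine ⟨hK.specRad_le_of_inv_one_sub_le (kNonneg_one_sub_mul_twoStageQ hK houter h₁ s)
    (kNonneg_one_sub_mul_twoStageQ hK houter h₂ s)
    (specRad_one_sub_mul_twoStageQ_lt_one hK hmono houter h₁ hs) hW₂ ?_, hW₂⟩
  rw [sub_sub_cancel, sub_sub_cancel]
  exact kNonneg_inv_mul_twoStageQ_sub hK hmono houter h₁ h₂ hs hge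

theorem stmt_13 {n : ℕ} (K : Set (Fin n → ℝ)) (hK : IsProperCone K)
    (A U V F G F' G' : Matrix (Fin n) (Fin n) ℝ)
    (hmono : KMonotone K A)
    (houter : KRegularSplitting K A U V)
    (h₁ : KWeakRegularSplittingII K U F G)
    (h₂ : KWeakRegularSplittingII K U F' G')
    (hc₁ : V * F⁻¹ * G = G * F⁻¹ * V)
    (hc₂ : V * F'⁻¹ * G' = G' * F'⁻¹ * V)
    (s : ℕ) (hs : 1 ≤ s)
    (hge : KNonneg K (G' * F'⁻¹ - G * F⁻¹))
    (hTP : KNonneg K (twoStageThat F G V s * (twoStageQ F G s)⁻¹)) :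
    specRad (twoStageT F G V s) ≤ specRad (twoStageT F' G' V s) ∧
    specRad (twoStageT F' G' V s) < 1 :=
  stmt_13_general K hK A U V F G F' G' hmono houter h₁ h₂ s hs hge
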